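/- Let a = 2π/(ln 2 − γ), where γ is the Euler–Mascheroni constant, and let c < 0. Consider the equation ln(1+λ)/(4π) = 1/a − 1/(a + cε − ε²·(ln λ/(4π) − 1/a)) for λ > 0. Then there exists ε₀ > 0 such that for all 0 < ε < ε₀ the equation has exactly two solutions: one solution lies in (λ_{a,ε}, ∞) with λ_{a,ε} = exp[4π(a/ε² − |c|/ε + 1/a)], and the other solution λ_ε lies in (0, exp[4π(−|c|/ε + 1/a)]). In particular −exp(−4π|c|/ε + 4π/a) < −λ_ε < 0. -/

import Mathlib

/-!
Write the denominator as `A - B log λ` with `B > 0`. It vanishes exactly at the threshold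
`λ* = exp (A / B)`, which for the parameters of the theorem is `λ_{a,ε}`. On each of the two
branches `(0, λ*)` and `(λ*, ∞)` the denominator has constant sign and decreases, so
`log (1 + λ)/κ - 1/a + 1/(A - B log λ)` is continuous and strictly increasing there, and each
branch carries exactly one zero: on `(0, λ*)` the function tends to `-1/a` at `0` and is positive
at the point where the denominator equals `a`; on `(λ*, ∞)` it runs from `-∞` to `+∞`.
-/

open Real Set Filter Topology

/-- The equation `D_ε(-λ) = 0` is `secular κ a A B λ = 0` with `κ = 4π`, `A = a + cε + ε²/a`
and `B = ε²/(4π)`. -/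
noncomputable def secular (κ a A B : ℝ) : ℝ → ℝ :=
  fun l => log (1 + l) / κ - 1 / a + 1 / (A - B * log l)

section Secular

variable {κ a A B : ℝ}

lemma sub_mul_log_pos_iff (hB : 0 < B) {l : ℝ} (hl : 0 < l) :
    0 < A - B * log l ↔ l < exp (A / B) := by
  rw [← log_lt_iff_lt_exp hl, lt_div_iff₀ hB, sub_pos, mul_comm]

lemma sub_mul_log_neg_iff (hB : 0 < B) {l : ℝ} (hl : 0 < l) :
    A - B * log l < 0 ↔ exp (A / B) < l := by
  rw [← lt_log_iff_exp_lt hl, div_lt_iff₀ hB, sub_neg, mul_comm]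

lemma continuousOn_secular :
    ContinuousOn (secular κ a A B) {l | 0 < l ∧ A - B * log l ≠ 0} := by
  rintro l ⟨hl, hD⟩
  have : ContinuousAt log l := continuousAt_log hl.ne'
  have : ContinuousAt (fun l => log (1 + l)) l :=
    (continuousAt_log (by linarith)).comp (by fun_prop)
  unfold secular
  exact ContinuousAt.continuousWithinAt (by fun_prop (disch := exact hD))

lemma strictMonoOn_log_one_add_div (hκ : 0 < κ) :
    StrictMonoOn (fun l => log (1 + l) / κ) (Ioi 0) := fun l hl m _ hlm => by
  have hl : (0 : ℝ) < l := hl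
  dsimp only
  gcongr

lemma strictMonoOn_secular_Ioo (hκ : 0 < κ) (hB : 0 < B) :
    StrictMonoOn (secular κ a A B) (Ioo 0 (exp (A / B))) := by
  intro l hl m hm hlm
  have hDm := (sub_mul_log_pos_iff hB hm.1).2 hm.2
  have hD : A - B * log m < A - B * log l := by
    gcongr
    exact hl.1
  have := strictMonoOn_log_one_add_div hκ hl.1 hm.1 hlm
  have := one_div_lt_one_div_of_lt hDm hD
  simp only [secular] at *
  linarith

lemma strictMonoOn_secular_Ioi (hκ : 0 < κ) (hB : 0 < B) :
    StrictMonoOn (secular κ a A B) (Ioi (exp (A / B))) := by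
  intro l hl m hm hlm
  have hl0 : 0 < l := (exp_pos _).trans hl
  have hDl := (sub_mul_log_neg_iff hB hl0).2 hl
  have hD : A - B * log m < A - B * log l := by
    gcongr
  have := strictMonoOn_log_one_add_div hκ hl0 (hl0.trans hlm) hlm
  have := one_div_lt_one_div_of_neg_of_lt hDl hD
  simp only [secular] at *
  linarith

lemma tendsto_secular_nhdsGT_zero (hB : 0 < B) :
    Tendsto (secular κ a A B) (𝓝[>] 0) (𝓝 (-(1 / a))) := by
  have hlog : Tendsto (fun l => log (1 + l) / κ - 1 / a) (𝓝[>] 0) (𝓝 (-(1 / a))) := by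
    have : ContinuousAt (fun l => log (1 + l) / κ - 1 / a) 0 :=
      ((continuousAt_log (by norm_num)).comp (by fun_prop)).div_const _ |>.sub continuousAt_const
    simpa using this.tendsto.mono_left nhdsWithin_le_nhds
  have hD : Tendsto (fun l => A - B * log l) (𝓝[>] 0) atTop :=
    tendsto_atTop_add_const_left _ A
      (tendsto_neg_atBot_atTop.comp (tendsto_log_nhdsGT_zero.const_mul_atBot hB))
  unfold secular
  simpa only [one_div, Function.comp_apply, add_zero] using hlog.add (tendsto_inv_atTop_zero.comp hD)

lemma tendsto_secular_nhdsGT_exp (hB : 0 < B) :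
    Tendsto (secular κ a A B) (𝓝[>] (exp (A / B))) atBot := by
  set t := exp (A / B)
  have ht : 0 < t := exp_pos _
  have hlog : Tendsto (fun l => log (1 + l) / κ - 1 / a) (𝓝[>] t)
      (𝓝 (log (1 + t) / κ - 1 / a)) := by
    have : ContinuousAt (fun l => log (1 + l) / κ - 1 / a) t :=
      ((continuousAt_log (by linarith)).comp (by fun_prop)).div_const _ |>.sub continuousAt_const
    exact this.tendsto.mono_left nhdsWithin_le_nhds
  have hD : Tendsto (fun l => A - B * log l) (𝓝[>] t) (𝓝[<] 0) := by
    refine tendsto_nhdsWithin_iff.2 ⟨?_, ?_⟩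
    · have : ContinuousAt (fun l => A - B * log l) t := by
        have := continuousAt_log ht.ne'
        fun_prop
      have h0 : A - B * log t = 0 := by
        rw [log_exp, mul_div_cancel₀ _ hB.ne', sub_self]
      simpa [h0] using this.tendsto.mono_left nhdsWithin_le_nhds
    · filter_upwards [self_mem_nhdsWithin] with l hl
      exact (sub_mul_log_neg_iff hB (ht.trans hl)).2 hl
  unfold secular
  simpa only [one_div, Function.comp_apply, add_zero] using hlog.add_atBot (tendsto_inv_nhdsLT_zero.comp hD)

lemma tendsto_secular_atTop (hκ : 0 < κ) (hB : 0 < B) :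
    Tendsto (secular κ a A B) atTop atTop := by
  have hlog : Tendsto (fun l => log (1 + l) / κ - 1 / a) atTop atTop :=
    tendsto_atTop_add_const_right _ _
      ((tendsto_log_atTop.comp (tendsto_atTop_add_const_left _ 1 tendsto_id)).atTop_div_const hκ)
  have hD : Tendsto (fun l => A - B * log l) atTop atBot := by
    simpa [sub_eq_add_neg] using tendsto_atBot_add_const_left _ A
      (tendsto_neg_atTop_atBot.comp (tendsto_log_atTop.const_mul_atTop hB))
  unfold secular
  simpa only [one_div, Function.comp_apply, add_zero] using hlog.atTop_add (tendsto_inv_atBot_zero.comp hD)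


/-- At the threshold the denominator is `0`, so `1 / 0 = 0` would make `λ*` a spurious root
unless `log (1 + λ*) / κ ≠ 1 / a`; the hypothesis `κ / a ≤ A / B` excludes this. -/
lemma secular_exp_pos (hκ : 0 < κ) (hB : 0 < B) (hAB : κ / a ≤ A / B) :
    0 < secular κ a A B (exp (A / B)) := by
  have hlog : A / B < log (1 + exp (A / B)) := by
    rw [lt_log_iff_exp_lt (by positivity)]
    linarith
  have : 1 / a < log (1 + exp (A / B)) / κ := by
    rw [lt_div_iff₀ hκ, one_div_mul_eq_div]
    linarith
  simp only [secular, log_exp, mul_div_cancel₀ _ hB.ne', sub_self, div_zero]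
  linarith

lemma secular_exp_sub_div_pos (hκ : 0 < κ) (hB : 0 < B) :
    0 < secular κ a A B (exp ((A - a) / B)) := by
  simp only [secular, log_exp, mul_div_cancel₀ _ hB.ne', sub_sub_cancel, sub_add_cancel]
  exact div_pos (log_pos (by linarith [exp_pos ((A - a) / B)])) hκ

lemma exists_secular_eq_zero_lt_exp_sub_div (hκ : 0 < κ) (ha : 0 < a) (hB : 0 < B) :
    ∃ l ∈ Ioo 0 (exp ((A - a) / B)), secular κ a A B l = 0 := by
  set M := exp ((A - a) / B)
  have hMt : M < exp (A / B) := exp_lt_exp.2 (by gcongr; linarith)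
  obtain ⟨l, hneg, hl⟩ := ((tendsto_secular_nhdsGT_zero hB).eventually_lt_const
    (neg_neg_of_pos (one_div_pos.2 ha))).and (Ioo_mem_nhdsGT (exp_pos _)) |>.exists
  have hcont : ContinuousOn (secular κ a A B) (Ioc 0 M) :=
    continuousOn_secular.mono fun m hm =>
      ⟨hm.1, ((sub_mul_log_pos_iff hB hm.1).2 (hm.2.trans_lt hMt)).ne'⟩
  obtain ⟨z, hz, hz0⟩ := isPreconnected_Ioc.intermediate_value ⟨hl.1, hl.2.le⟩
    ⟨exp_pos _, le_rfl⟩ hcont ⟨hneg.le, (secular_exp_sub_div_pos hκ hB).le⟩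
  refine ⟨z, ⟨hz.1, hz.2.lt_of_ne ?_⟩, hz0⟩
  rintro rfl
  exact (secular_exp_sub_div_pos hκ hB).ne' hz0

lemma exists_secular_eq_zero_gt_exp (hκ : 0 < κ) (hB : 0 < B) :
    ∃ l ∈ Ioi (exp (A / B)), secular κ a A B l = 0 := by
  obtain ⟨x, hx, hneg⟩ := ((tendsto_secular_nhdsGT_exp hB).eventually_lt_atBot 0).and
    self_mem_nhdsWithin |>.exists
  obtain ⟨y, hpos, hy⟩ := ((tendsto_secular_atTop hκ hB).eventually_gt_atTop 0).and
    (eventually_gt_atTop (exp (A / B))) |>.exists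
  have hcont : ContinuousOn (secular κ a A B) (Ioi (exp (A / B))) :=
    continuousOn_secular.mono fun m hm =>
      ⟨(exp_pos _).trans hm, ((sub_mul_log_neg_iff hB ((exp_pos _).trans hm)).2 hm).ne⟩
  simpa using isPreconnected_Ioi.intermediate_value hneg hy hcont ⟨hx.le, hpos.le⟩

theorem exists_pair_secular_zeros (hκ : 0 < κ) (ha : 0 < a) (hB : 0 < B) (hAB : κ / a ≤ A / B) :
    ∃ l₁ l₂, exp (A / B) < l₁ ∧ 0 < l₂ ∧ l₂ < exp ((A - a) / B) ∧ l₂ < l₁ ∧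
      secular κ a A B l₁ = 0 ∧ secular κ a A B l₂ = 0 ∧
      ∀ l, 0 < l → secular κ a A B l = 0 → l = l₁ ∨ l = l₂ := by
  obtain ⟨l₁, hl₁, h₁⟩ := exists_secular_eq_zero_gt_exp (a := a) hκ hB
  obtain ⟨l₂, hl₂, h₂⟩ := exists_secular_eq_zero_lt_exp_sub_div hκ ha hB
  have hl₂t : l₂ < exp (A / B) := hl₂.2.trans (exp_lt_exp.2 (by gcongr; linarith))
  refine ⟨l₁, l₂, hl₁, hl₂.1, hl₂.2, hl₂t.trans hl₁, h₁, h₂, fun l hl h => ?_⟩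
  rcases lt_trichotomy l (exp (A / B)) with hlt | rfl | hgt
  · exact .inr <| (strictMonoOn_secular_Ioo hκ hB).injOn ⟨hl, hlt⟩ ⟨hl₂.1, hl₂t⟩ (h.trans h₂.symm)
  · exact absurd h (secular_exp_pos hκ hB hAB).ne'
  · exact .inl <| (strictMonoOn_secular_Ioi hκ hB).injOn hgt hl₁ (h.trans h₁.symm)

end Secular

lemma eulerMascheroniConstant_lt_log_two : eulerMascheroniConstant < log 2 :=
  eulerMascheroniConstant_lt_two_thirds.trans (lt_trans (by norm_num) log_two_gt_d9)

lemma eigenvalue_equation_iff_secular_eq_zero (a c ε l : ℝ) :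
    log (1 + l) / (4 * π) = 1 / a - 1 / (a + c * ε - ε ^ 2 * (log l / (4 * π) - 1 / a)) ↔
      secular (4 * π) a (a + c * ε + ε ^ 2 / a) (ε ^ 2 / (4 * π)) l = 0 := by
  have hD : a + c * ε - ε ^ 2 * (log l / (4 * π) - 1 / a) =
      a + c * ε + ε ^ 2 / a - ε ^ 2 / (4 * π) * log l := by ring
  rw [hD, secular]
  constructor <;> intro h <;> linarith

/-- d = 2, θ₀ = 0, c < 0: for small ε the equation
`ln(1+λ)/(4π) = 1/a − 1/(a + cε − ε²(ln λ/(4π) − 1/a))` (λ > 0) has exactly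
two solutions: one in `(λ_{a,ε}, ∞)` with
`λ_{a,ε} = exp[4π(a/ε² − |c|/ε + 1/a)]`, and the other, `λ_ε`, in
`(0, exp[4π(−|c|/ε + 1/a)])`; in particular
`−exp(−4π|c|/ε + 4π/a) < −λ_ε < 0`. -/
theorem two_eigenvalues_d2_theta0_zero (a c : ℝ)
    (ha : a = 2 * Real.pi / (Real.log 2 - Real.eulerMascheroniConstant))
    (hc : c < 0) :
    ∃ ε₀ > (0 : ℝ), ∀ ε : ℝ, 0 < ε → ε < ε₀ →
      ∃ lam₁ lam₂ : ℝ,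
        Real.exp (4 * Real.pi * (a / ε ^ 2 - |c| / ε + 1 / a)) < lam₁ ∧
        0 < lam₂ ∧ lam₂ < Real.exp (4 * Real.pi * (-|c| / ε + 1 / a)) ∧
        Real.log (1 + lam₁) / (4 * Real.pi) =
          1 / a - 1 / (a + c * ε - ε ^ 2 * (Real.log lam₁ / (4 * Real.pi) - 1 / a)) ∧
        Real.log (1 + lam₂) / (4 * Real.pi) =
          1 / a - 1 / (a + c * ε - ε ^ 2 * (Real.log lam₂ / (4 * Real.pi) - 1 / a)) ∧
        lam₁ ≠ lam₂ ∧
        (∀ lam : ℝ, 0 < lam →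
          Real.log (1 + lam) / (4 * Real.pi) =
            1 / a - 1 / (a + c * ε - ε ^ 2 * (Real.log lam / (4 * Real.pi) - 1 / a)) →
          lam = lam₁ ∨ lam = lam₂) ∧
        -Real.exp (-(4 * Real.pi * |c|) / ε + 4 * Real.pi / a) < -lam₂ ∧ -lam₂ < 0 := by
  have ha0 : 0 < a := ha ▸ div_pos (by positivity) (sub_pos.2 eulerMascheroniConstant_lt_log_two)
  refine ⟨a / -c, div_pos ha0 (neg_pos.2 hc), fun ε hε hεlt => ?_⟩
  have hac : 0 < a + c * ε := by
    rw [lt_div_iff₀ (neg_pos.2 hc)] at hεlt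
    linarith
  have hthreshold : (a + c * ε + ε ^ 2 / a) / (ε ^ 2 / (4 * π)) =
      4 * π * (a / ε ^ 2 - |c| / ε + 1 / a) := by
    rw [abs_of_neg hc]; field_simp; ring
  have hbound : (a + c * ε + ε ^ 2 / a - a) / (ε ^ 2 / (4 * π)) =
      4 * π * (-|c| / ε + 1 / a) := by
    rw [abs_of_neg hc]; field_simp; ring
  have hAB : 4 * π / a ≤ (a + c * ε + ε ^ 2 / a) / (ε ^ 2 / (4 * π)) := by
    have : (a + c * ε + ε ^ 2 / a) / (ε ^ 2 / (4 * π)) =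
        4 * π / a + 4 * π * (a + c * ε) / ε ^ 2 := by
      field_simp; ring
    have : 0 ≤ 4 * π * (a + c * ε) / ε ^ 2 := by positivity
    linarith
  obtain ⟨l₁, l₂, h₁, hl₂, h₂, hl₂₁, hz₁, hz₂, huniq⟩ :=
    exists_pair_secular_zeros (by positivity) ha0 (by positivity) hAB
  rw [hthreshold] at h₁
  rw [hbound] at h₂
  simp only [eigenvalue_equation_iff_secular_eq_zero]
  refine ⟨l₁, l₂, h₁, hl₂, h₂, hz₁, hz₂, hl₂₁.ne', huniq, ?_, neg_neg_of_pos hl₂⟩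
  rw [show -(4 * π * |c|) / ε + 4 * π / a = 4 * π * (-|c| / ε + 1 / a) by ring]
  exact neg_lt_neg h₂
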